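/- arXiv:1608.03661 — 4 statements merged into one kernel-verified Lean document; each statement's English description precedes it below -/
import Mathlib

section
/- Let (E, b, T) be an n-dimensional Hilbert–Poincaré complex over a unital C*-algebra A, let B = b + b* and let S be the operator defined by S(v) = i^{p(p-1)+l} T(v) for v in E_p (where n = 2l or 2l+1). Then S is self-adjoint, satisfies bS + Sb* = 0, and the self-adjoint operators B + S and B - S are invertible. -/
/-!
Statement 0: For an `n`-dimensional Hilbert–Poincaré complex `(E, b, T)` over a unital
C*-algebra (modelled here on a complex Hilbert space, with the grading of the complex
recorded by a family of orthogonal projections `P p`), the operator `S` defined by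
`S v = i^(p(p-1)+l) T v` on degree-`p` vectors (where `n = 2l` or `2l+1`) is self-adjoint,
satisfies `b S + S b* = 0`, and the self-adjoint operators `B + S` and `B - S` are
invertible, where `B = b + b*`.
-/

noncomputable section

open ContinuousLinearMap

/-- A flat model of an `n`-dimensional Hilbert–Poincaré complex: the underlying Hilbert
module is the direct sum of the chain groups `E_0, …, E_n`, recorded by the grading
projections `P p`; `b` is the differential and `T` the Poincaré duality operator, which is
a chain homotopy equivalence from the dual complex `(E, b*)` to `(E, b)`. -/
structure HilbertPoincareComplex (n : ℕ) (H : Type*) [NormedAddCommGroup H]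
    [InnerProductSpace ℂ H] [CompleteSpace H] where
  P : ℕ → H →L[ℂ] H
  b : H →L[ℂ] H
  T : H →L[ℂ] H
  P_selfAdjoint : ∀ p, IsSelfAdjoint (P p)
  P_idem : ∀ p, P p ∘L P p = P p
  P_orth : ∀ p q, p ≠ q → P p ∘L P q = 0
  P_bounded : ∀ p, n < p → P p = 0
  P_total : ∑ p ∈ Finset.range (n + 1), P p = ContinuousLinearMap.id ℂ H
  b_deg : ∀ p, b ∘L P (p + 1) = P p ∘L (b ∘L P (p + 1))
  b_bot : b ∘L P 0 = 0
  b_sq : b ∘L b = 0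
  T_deg : ∀ p, p ≤ n → T ∘L P p = P (n - p) ∘L (T ∘L P p)
  T_adjoint : ∀ p, p ≤ n →
    (ContinuousLinearMap.adjoint T) ∘L P p = ((-1 : ℂ) ^ ((n - p) * p)) • (T ∘L P p)
  T_b : ∀ p, p ≤ n →
    (T ∘L ContinuousLinearMap.adjoint b) ∘L P p + ((-1 : ℂ) ^ p) • ((b ∘L T) ∘L P p) = 0
  T_equiv : ∃ T' h₁ h₂ : H →L[ℂ] H,
    T ∘L T' - ContinuousLinearMap.id ℂ H = b ∘L h₁ + h₁ ∘L b ∧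
    T' ∘L T - ContinuousLinearMap.id ℂ H =
      (ContinuousLinearMap.adjoint b) ∘L h₂ + h₂ ∘L (ContinuousLinearMap.adjoint b)

/-- The operator `S` of a Hilbert–Poincaré complex: `S v = i^(p(p-1)+l) T v` for `v` of
degree `p`, where `l = n / 2` (so that `n = 2l` or `n = 2l + 1`). -/
def dualityS {n : ℕ} {H : Type*} [NormedAddCommGroup H] [InnerProductSpace ℂ H]
    [CompleteSpace H] (Cx : HilbertPoincareComplex n H) : H →L[ℂ] H :=
  ∑ p ∈ Finset.range (n + 1), (Complex.I ^ (p * (p - 1) + n / 2)) • (Cx.T ∘L Cx.P p)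


/-!
Write `S = T U`, where the unitary `U` acts on `E_p` as multiplication by `i^(p(p-1)+l)`.
Bookkeeping with powers of `i` turns `T* = ±T` and `T b* = ±b T` into `S* = S` and
`b S + S b* = 0`, and compressing a homotopy inverse of `T` (and the homotopies) to the
appropriately graded parts yields a homotopy inverse of `S : (E, b*) → (E, b)`.

Invertibility of `B ± S` is the Hilbert-space shadow of the contractibility of the mapping
cone of a homotopy equivalence. For `P = b + b* + f` with `f = ±S` one has
`‖P v‖² = ‖(b + f) v‖² + ‖b* v‖²`, because `b f + f b* = 0`. A contraction of the cone of `f`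
yields operators with `2 = b X + (b* + f) X' + Y b* + W (b + f)`, and pairing this identity
with `v` bounds `‖v‖` by a multiple of `‖P v‖`. A self-adjoint operator that is bounded
below is invertible.
-/

open scoped InnerProduct InnerProductSpace NNReal

section MappingCone

variable {R : Type*} [Ring R] {d e f g z k m : R}

/- `d` and `e` are differentials and `f` anticommutes with them; `g` is a homotopy inverse of
`f` that need not anticommute. Its defect `Δ = e g + g d` satisfies `f Δ = Δ f = 0`, and
`z = g + Δ k` is an anticommuting homotopy inverse. -/
theorem exists_chain_homotopy_inverse (hd : d * d = 0) (he : e * e = 0)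
    (hdf : d * f + f * e = 0) (h₁ : f * g = 1 + d * k + k * d)
    (h₂ : g * f = 1 + e * m + m * e) :
    ∃ z m' : R, e * z + z * d = 0 ∧ f * z = 1 + d * k + k * d ∧
      z * f = 1 + e * m' + m' * e := by
  obtain ⟨Δ, hΔ⟩ : ∃ Δ, Δ = e * g + g * d := ⟨_, rfl⟩
  have hfΔ : f * Δ = 0 := by
    linear_combination (norm := noncomm_ring)
      f * hΔ + h₁ * d - d * h₁ + hdf * g + k * hd - hd * k
  have hΔf : Δ * f = 0 := by
    linear_combination (norm := noncomm_ring)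
      hΔ * f + e * h₂ + he * m + g * hdf - h₂ * e - m * he
  refine ⟨g + Δ * k, m + g * k * f + g * f * m, ?_, ?_, ?_⟩
  · linear_combination (norm := noncomm_ring)
      hΔf * g - Δ * h₁ + he * g * k - g * hd * k - hΔ + e * hΔ * k - hΔ * d * k
  · linear_combination (norm := noncomm_ring) h₁ + hfΔ * k
  · linear_combination (norm := noncomm_ring)
      h₂ - g * k * hdf - g * h₁ * f + g * f * h₂ + m * he * m + h₂ * e * m - he * m * m
        - e * h₂ * m + hΔ * k * f

/- With `ζ = -(f m + k f)`, the matrix `[[-k, k ζ], [z, -m - z ζ]]` contracts the mapping cone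
`[[d, f], [0, e]]` of `f`; the identity below is the sum of the four entries of the
contraction identity. -/
theorem exists_cone_contraction (hdf : d * f + f * e = 0) (hz : e * z + z * d = 0)
    (h₁ : f * z = 1 + d * k + k * d) (h₂ : z * f = 1 + e * m + m * e) :
    ∃ X X' Y W : R, d * X + (e + f) * X' + Y * e + W * (d + f) = 2 := by
  obtain ⟨ζ, hζ⟩ : ∃ ζ, ζ = -(f * m + k * f) := ⟨_, rfl⟩
  have hdζ : d * ζ = ζ * e := by
    linear_combination (norm := noncomm_ring)
      d * hζ - hζ * e - hdf * m + k * hdf - f * h₂ + h₁ * f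
  refine ⟨-k + k * ζ, z - m - z * ζ, k * ζ - m - z * ζ, z - k, ?_⟩
  rw [← one_add_one_eq_two]
  linear_combination (norm := noncomm_ring)
    h₁ + hz + h₂ - hz * ζ + z * hdζ - h₁ * ζ - k * hdζ - hζ

end MappingCone

section BoundedBelow

variable {𝕜 E : Type*} [RCLike 𝕜] [NormedAddCommGroup E] [InnerProductSpace 𝕜 E]
  [CompleteSpace E]

theorem ContinuousLinearMap.adjoint_mul (A B : E →L[𝕜] E) : (A * B)† = B† * A† :=
  adjoint_comp A B

theorem IsSelfAdjoint.isUnit_of_antilipschitz {T : E →L[𝕜] E} (hT : IsSelfAdjoint T)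
    {K : ℝ≥0} (hK : AntilipschitzWith K T) : IsUnit T := by
  rw [isUnit_iff_bijective, bijective_iff_dense_range_and_antilipschitz]
  refine ⟨?_, K, hK⟩
  rw [Submodule.topologicalClosure_eq_top_iff, orthogonal_range, hT.adjoint_eq,
    LinearMap.ker_eq_bot]
  exact hK.injective

variable {d f : E →L[𝕜] E}

theorem norm_add_adjoint_add_apply_sq (hd : d * d = 0) (hf : IsSelfAdjoint f)
    (hdf : d * f + f * d† = 0) (v : E) :
    ‖(d + d† + f) v‖ ^ 2 = ‖(d + f) v‖ ^ 2 + ‖(d†) v‖ ^ 2 := by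
  have hdd : ⟪d v, (d†) v⟫_𝕜 = 0 := by
    rw [adjoint_inner_right, ← mul_apply_eq_comp, hd, zero_apply, inner_zero_left]
  have hfd : ⟪f v, (d†) v⟫_𝕜 = -star ⟪f v, (d†) v⟫_𝕜 := calc
    ⟪f v, (d†) v⟫_𝕜 = ⟪d (f v), v⟫_𝕜 := adjoint_inner_right _ _ _
    _ = -⟪f ((d†) v), v⟫_𝕜 := by
      rw [← mul_apply_eq_comp, eq_neg_of_add_eq_zero_left hdf, neg_apply, inner_neg_left,
        mul_apply_eq_comp]
    _ = -⟪(d†) v, f v⟫_𝕜 := by rw [← adjoint_inner_left, hf.adjoint_eq]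
    _ = -star ⟪f v, (d†) v⟫_𝕜 := by rw [RCLike.star_def, inner_conj_symm]
  have hre : RCLike.re ⟪(d + f) v, (d†) v⟫_𝕜 = 0 := by
    have := congrArg RCLike.re hfd
    rw [RCLike.star_def, map_neg, RCLike.conj_re] at this
    rw [add_apply, inner_add_left, hdd, zero_add]
    linarith
  rw [show (d + d† + f) v = (d + f) v + (d†) v by simp only [add_apply]; abel,
    norm_add_sq (𝕜 := 𝕜), hre]
  ring

theorem norm_add_apply_le (hd : d * d = 0) (hf : IsSelfAdjoint f) (hdf : d * f + f * d† = 0)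
    (v : E) : ‖(d + f) v‖ ≤ ‖(d + d† + f) v‖ :=
  le_of_pow_le_pow_left₀ two_ne_zero (norm_nonneg _) <| by
    rw [norm_add_adjoint_add_apply_sq hd hf hdf]
    linarith [sq_nonneg ‖(d†) v‖]

theorem norm_adjoint_apply_le (hd : d * d = 0) (hf : IsSelfAdjoint f)
    (hdf : d * f + f * d† = 0) (v : E) : ‖(d†) v‖ ≤ ‖(d + d† + f) v‖ :=
  le_of_pow_le_pow_left₀ two_ne_zero (norm_nonneg _) <| by
    rw [norm_add_adjoint_add_apply_sq hd hf hdf]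
    linarith [sq_nonneg ‖(d + f) v‖]

theorem antilipschitz_add_adjoint_add (hd : d * d = 0) (hf : IsSelfAdjoint f)
    (hdf : d * f + f * d† = 0) {X X' Y W : E →L[𝕜] E}
    (h : d * X + (d† + f) * X' + Y * d† + W * (d + f) = 2) :
    AntilipschitzWith (‖X‖₊ + ‖X'‖₊ + ‖Y‖₊ + ‖W‖₊) (d + d† + f) := by
  refine (d + d† + f).antilipschitz_of_bound fun v => ?_
  have hA := norm_add_apply_le hd hf hdf v
  have hB := norm_adjoint_apply_le hd hf hdf v
  have key : ⟪v, (2 : E →L[𝕜] E) v⟫_𝕜 = ⟪(d†) v, X v⟫_𝕜 + ⟪(d + f) v, X' v⟫_𝕜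
      + ⟪v, Y ((d†) v)⟫_𝕜 + ⟪v, W ((d + f) v)⟫_𝕜 := by
    rw [← h]
    simp only [add_apply, mul_apply_eq_comp, inner_add_right, inner_add_left,
      adjoint_inner_right]
    rw [← adjoint_inner_left d (X v) v, ← adjoint_inner_left f (X' v) v, hf.adjoint_eq]
  have hv : 2 * ‖v‖ ^ 2 ≤ (‖X‖ + ‖X'‖ + ‖Y‖ + ‖W‖) * ‖(d + d† + f) v‖ * ‖v‖ := calc
    2 * ‖v‖ ^ 2 = ‖⟪v, (2 : E →L[𝕜] E) v⟫_𝕜‖ := by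
      simp [ofNat_apply, two_nsmul, inner_add_right, ← two_mul, inner_self_eq_norm_sq_to_K]
    _ ≤ ‖⟪(d†) v, X v⟫_𝕜‖ + ‖⟪(d + f) v, X' v⟫_𝕜‖ + ‖⟪v, Y ((d†) v)⟫_𝕜‖
        + ‖⟪v, W ((d + f) v)⟫_𝕜‖ := by
      rw [key]
      exact norm_add₄_le
    _ ≤ ‖(d†) v‖ * (‖X‖ * ‖v‖) + ‖(d + f) v‖ * (‖X'‖ * ‖v‖) + ‖v‖ * (‖Y‖ * ‖(d†) v‖)
        + ‖v‖ * (‖W‖ * ‖(d + f) v‖) := by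
      gcongr <;> refine (norm_inner_le_norm _ _).trans ?_ <;> gcongr <;> exact le_opNorm _ _
    _ = (‖X‖ * ‖(d†) v‖ + ‖X'‖ * ‖(d + f) v‖ + ‖Y‖ * ‖(d†) v‖ + ‖W‖ * ‖(d + f) v‖) * ‖v‖ := by
      ring
    _ ≤ (‖X‖ * ‖(d + d† + f) v‖ + ‖X'‖ * ‖(d + d† + f) v‖ + ‖Y‖ * ‖(d + d† + f) v‖
        + ‖W‖ * ‖(d + d† + f) v‖) * ‖v‖ := by gcongr
    _ = (‖X‖ + ‖X'‖ + ‖Y‖ + ‖W‖) * ‖(d + d† + f) v‖ * ‖v‖ := by ring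
  simp only [NNReal.coe_add, coe_nnnorm]
  rcases (norm_nonneg v).eq_or_lt with hv0 | hv0
  · rw [← hv0]
    positivity
  · exact le_of_mul_le_mul_right (by nlinarith) hv0

theorem isUnit_add_adjoint_add_of_homotopy_inverse {g k₁ k₂ : E →L[𝕜] E} (hd : d * d = 0)
    (hf : IsSelfAdjoint f) (hdf : d * f + f * d† = 0) (h₁ : f * g = 1 + d * k₁ + k₁ * d)
    (h₂ : g * f = 1 + d† * k₂ + k₂ * d†) : IsUnit (d + d† + f) := by
  have hd' : d† * d† = 0 := by rw [← adjoint_mul, hd, map_zero]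
  obtain ⟨z, m, hz, hfz, hzf⟩ := exists_chain_homotopy_inverse hd hd' hdf h₁ h₂
  obtain ⟨X, X', Y, W, h⟩ := exists_cone_contraction hdf hz hfz hzf
  exact ((IsSelfAdjoint.add_star_self d).add hf).isUnit_of_antilipschitz
    (antilipschitz_add_adjoint_add hd hf hdf h)

end BoundedBelow

theorem Nat.cast_mul_sub_one {R : Type*} [Ring R] (q : ℕ) :
    ((q * (q - 1) : ℕ) : R) = q * (q - 1) := by
  cases q <;> simp

def dualityCoeff (n p : ℕ) : ℂ := Complex.I ^ (p * (p - 1) + n / 2)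

theorem star_dualityCoeff_mul_self (n p : ℕ) :
    star (dualityCoeff n p) * dualityCoeff n p = 1 := by
  rw [dualityCoeff, star_pow, ← mul_pow, Complex.star_def, Complex.conj_I, neg_mul,
    Complex.I_mul_I, neg_neg, one_pow]

theorem dualityCoeff_succ (n p : ℕ) : dualityCoeff n (p + 1) = (-1) ^ p * dualityCoeff n p := by
  rw [dualityCoeff, dualityCoeff, ← Complex.I_sq, ← pow_mul, ← pow_add]
  congr 1
  cases p <;> simp
  ring

theorem neg_one_pow_mul_star_dualityCoeff {n p : ℕ} (hp : p ≤ n) :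
    (-1) ^ ((n - p) * p) * star (dualityCoeff n (n - p)) = dualityCoeff n p := by
  obtain ⟨q, rfl⟩ := Nat.exists_eq_add_of_le hp
  rw [dualityCoeff, dualityCoeff, Nat.add_sub_cancel_left, star_pow, Complex.star_def,
    Complex.conj_I, show (-1 : ℂ) = Complex.I ^ 2 by simp,
    show -Complex.I = Complex.I ^ 3 by simp [pow_succ], ← pow_mul, ← pow_mul, ← pow_add,
    Complex.I_pow_eq_pow_mod, Complex.I_pow_eq_pow_mod (p * (p - 1) + _)]
  congr 1
  rw [← ZMod.natCast_eq_natCast_iff']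
  -- With `p + q = 2 l + r`, the exponents differ mod 4 by `r - (p - q)²`, and `p - q ≡ r [MOD 2]`.
  have key : ∀ p q l r : ZMod 4, r * r = r → p + q = 2 * l + r →
      2 * (q * p) + 3 * (q * (q - 1) + l) = p * (p - 1) + l := by decide
  have hr : (((p + q) % 2 : ℕ) : ZMod 4) * ((p + q) % 2 : ℕ) = ((p + q) % 2 : ℕ) := by
    rcases Nat.mod_two_eq_zero_or_one (p + q) with h | h <;> simp [h]
  have hn : ((p : ZMod 4) + q) = 2 * ((p + q) / 2 : ℕ) + ((p + q) % 2 : ℕ) := by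
    have := congrArg (Nat.cast : ℕ → ZMod 4) (Nat.div_add_mod (p + q) 2)
    push_cast at this
    exact this.symm
  have hp' := Nat.cast_mul_sub_one (R := ZMod 4) p
  have hq' := Nat.cast_mul_sub_one (R := ZMod 4) q
  generalize p * (p - 1) = a at hp' ⊢
  generalize q * (q - 1) = b at hq' ⊢
  push_cast
  rw [hp', hq']
  exact key _ _ _ _ hr hn

namespace HilbertPoincareComplex

variable {n : ℕ} {H : Type*} [NormedAddCommGroup H] [InnerProductSpace ℂ H] [CompleteSpace H]
  (Cx : HilbertPoincareComplex n H)

theorem P_mul_self (p : ℕ) : Cx.P p * Cx.P p = Cx.P p := Cx.P_idem p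

theorem P_mul_P_of_ne {p q : ℕ} (h : p ≠ q) : Cx.P p * Cx.P q = 0 := Cx.P_orth p q h

theorem adjoint_P (p : ℕ) : (Cx.P p)† = Cx.P p := Cx.P_selfAdjoint p

theorem sum_P : ∑ p ∈ Finset.range (n + 1), Cx.P p = 1 := Cx.P_total

theorem b_mul_P_zero : Cx.b * Cx.P 0 = 0 := Cx.b_bot

theorem T_mul_P {p : ℕ} (hp : p ≤ n) : Cx.T * Cx.P p = Cx.P (n - p) * (Cx.T * Cx.P p) :=
  Cx.T_deg p hp

theorem ext_mul_P {X Y : H →L[ℂ] H} (h : ∀ p ≤ n, X * Cx.P p = Y * Cx.P p) : X = Y := by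
  rw [← mul_one X, ← mul_one Y, ← Cx.sum_P]
  simp only [Finset.mul_sum]
  exact Finset.sum_congr rfl fun p hp => h p (Nat.lt_succ_iff.mp (Finset.mem_range.mp hp))

theorem sum_mul_P {F : ℕ → H →L[ℂ] H} (hF : ∀ q, F q * Cx.P q = F q) (p : ℕ) :
    (∑ q ∈ Finset.range (n + 1), F q) * Cx.P p = F p := by
  rw [Finset.sum_mul, Finset.sum_eq_single p]
  · exact hF p
  · intro q _ hqp
    rw [← hF q, mul_assoc, Cx.P_mul_P_of_ne hqp, mul_zero]
  · intro hp
    rw [← hF p, Cx.P_bounded p (by simpa using hp), mul_zero]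

theorem P_mul_b (p : ℕ) : Cx.P p * Cx.b = Cx.b * Cx.P (p + 1) := by
  refine Cx.ext_mul_P fun r _ => ?_
  rcases r with _ | s
  · rw [mul_assoc, mul_assoc, b_mul_P_zero, Cx.P_mul_P_of_ne (Nat.succ_ne_zero p), mul_zero,
      mul_zero]
  · rw [mul_assoc, show Cx.b * Cx.P (s + 1) = Cx.P s * (Cx.b * Cx.P (s + 1)) from Cx.b_deg s,
      ← mul_assoc, mul_assoc Cx.b]
    by_cases hps : p = s
    · subst hps
      rw [Cx.P_mul_self, Cx.P_mul_self]
      exact (Cx.b_deg p).symm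
    · rw [Cx.P_mul_P_of_ne hps, Cx.P_mul_P_of_ne (by omega), zero_mul, mul_zero]

theorem adjoint_b_mul_P (p : ℕ) : Cx.b† * Cx.P p = Cx.P (p + 1) * Cx.b† := by
  simpa only [adjoint_mul, adjoint_P] using congrArg adjoint (Cx.P_mul_b p)

theorem P_mul_T {p : ℕ} (hp : p ≤ n) : Cx.P p * Cx.T = Cx.T * Cx.P (n - p) := by
  refine Cx.ext_mul_P fun r hr => ?_
  rw [mul_assoc, Cx.T_mul_P hr, ← mul_assoc, mul_assoc Cx.T]
  by_cases hpr : p = n - r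
  · rw [hpr, Nat.sub_sub_self hr, Cx.P_mul_self, Cx.P_mul_self, ← Cx.T_mul_P hr]
  · rw [Cx.P_mul_P_of_ne hpr, Cx.P_mul_P_of_ne (by omega), zero_mul, mul_zero]

def phase (a : ℕ → ℂ) : H →L[ℂ] H := ∑ p ∈ Finset.range (n + 1), a p • Cx.P p

/- `T'` and the homotopies provided by `T_equiv` need not respect the grading. The compressions
below keep the homotopy identities, since `b` has degree `-1` and `T` maps `E_p` to `E_(n-p)`,
and the resulting degree-preserving operators commute with every `phase a`. -/
def blockDiag (X : H →L[ℂ] H) : H →L[ℂ] H := ∑ p ∈ Finset.range (n + 1), Cx.P p * X * Cx.P p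

def raise (h : H →L[ℂ] H) : H →L[ℂ] H := ∑ p ∈ Finset.range (n + 1), Cx.P (p + 1) * h * Cx.P p

def dualPart (Y : H →L[ℂ] H) : H →L[ℂ] H :=
  ∑ p ∈ Finset.range (n + 1), Cx.P (n - p) * Y * Cx.P p

theorem phase_mul_P (a : ℕ → ℂ) (p : ℕ) : Cx.phase a * Cx.P p = a p • Cx.P p :=
  Cx.sum_mul_P (fun q => by rw [smul_mul_assoc, Cx.P_mul_self]) p

theorem blockDiag_mul_P (X : H →L[ℂ] H) (p : ℕ) :
    Cx.blockDiag X * Cx.P p = Cx.P p * X * Cx.P p :=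
  Cx.sum_mul_P (fun q => by rw [mul_assoc, Cx.P_mul_self]) p

theorem raise_mul_P (h : H →L[ℂ] H) (p : ℕ) :
    Cx.raise h * Cx.P p = Cx.P (p + 1) * h * Cx.P p :=
  Cx.sum_mul_P (fun q => by rw [mul_assoc, Cx.P_mul_self]) p

theorem dualPart_mul_P (Y : H →L[ℂ] H) (p : ℕ) :
    Cx.dualPart Y * Cx.P p = Cx.P (n - p) * Y * Cx.P p :=
  Cx.sum_mul_P (fun q => by rw [mul_assoc, Cx.P_mul_self]) p

theorem phase_mul_phase {a b : ℕ → ℂ} (hab : ∀ p, a p * b p = 1) :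
    Cx.phase a * Cx.phase b = 1 :=
  Cx.ext_mul_P fun p _ => by
    rw [mul_assoc, phase_mul_P, mul_smul_comm, phase_mul_P, smul_smul, mul_comm, hab, one_smul,
      one_mul]

theorem adjoint_phase (a : ℕ → ℂ) : (Cx.phase a)† = Cx.phase fun p => star (a p) := by
  rw [← star_eq_adjoint, phase, phase, star_sum]
  simp only [star_smul, star_eq_adjoint, adjoint_P]

theorem phase_mul_blockDiag (a : ℕ → ℂ) (X : H →L[ℂ] H) :
    Cx.phase a * Cx.blockDiag X = Cx.blockDiag X * Cx.phase a :=
  Cx.ext_mul_P fun p _ => by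
    rw [mul_assoc, blockDiag_mul_P, ← mul_assoc, ← mul_assoc, phase_mul_P,
      mul_assoc (Cx.blockDiag X), phase_mul_P, mul_smul_comm, blockDiag_mul_P, smul_mul_assoc,
      smul_mul_assoc]

theorem blockDiag_one : Cx.blockDiag 1 = 1 :=
  Cx.ext_mul_P fun p _ => by rw [blockDiag_mul_P, mul_one, Cx.P_mul_self, one_mul]

theorem blockDiag_add (X Y : H →L[ℂ] H) :
    Cx.blockDiag (X + Y) = Cx.blockDiag X + Cx.blockDiag Y :=
  Cx.ext_mul_P fun p _ => by simp only [add_mul, blockDiag_mul_P, mul_add]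

theorem adjoint_blockDiag (X : H →L[ℂ] H) : (Cx.blockDiag X)† = Cx.blockDiag (X†) := by
  rw [← star_eq_adjoint, blockDiag, blockDiag, star_sum]
  simp only [star_mul, star_eq_adjoint, adjoint_P, mul_assoc]

theorem blockDiag_b_mul (h : H →L[ℂ] H) : Cx.blockDiag (Cx.b * h) = Cx.b * Cx.raise h :=
  Cx.ext_mul_P fun p _ => by
    rw [blockDiag_mul_P, mul_assoc Cx.b, raise_mul_P, ← mul_assoc (Cx.P p), P_mul_b]
    simp only [mul_assoc]

theorem blockDiag_mul_b (h : H →L[ℂ] H) : Cx.blockDiag (h * Cx.b) = Cx.raise h * Cx.b :=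
  Cx.ext_mul_P fun p _ => by
    rw [blockDiag_mul_P, mul_assoc (Cx.raise h)]
    rcases p with _ | s
    · simp only [mul_assoc, b_mul_P_zero, mul_zero]
    · rw [← P_mul_b, ← mul_assoc (Cx.raise h), raise_mul_P]
      simp only [mul_assoc]
      rw [P_mul_b]

theorem blockDiag_adjoint_b_mul (h : H →L[ℂ] H) :
    Cx.blockDiag (Cx.b† * h) = Cx.b† * (Cx.raise (h†))† := by
  simpa only [adjoint_blockDiag, adjoint_mul, adjoint_adjoint]
    using congrArg adjoint (Cx.blockDiag_mul_b (h†))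

theorem blockDiag_mul_adjoint_b (h : H →L[ℂ] H) :
    Cx.blockDiag (h * Cx.b†) = (Cx.raise (h†))† * Cx.b† := by
  simpa only [adjoint_blockDiag, adjoint_mul, adjoint_adjoint]
    using congrArg adjoint (Cx.blockDiag_b_mul (h†))

theorem T_mul_dualPart (Y : H →L[ℂ] H) : Cx.T * Cx.dualPart Y = Cx.blockDiag (Cx.T * Y) :=
  Cx.ext_mul_P fun p hp => by
    rw [mul_assoc, dualPart_mul_P, blockDiag_mul_P, ← mul_assoc, ← mul_assoc, ← Cx.P_mul_T hp,
      mul_assoc (Cx.P p)]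

theorem dualPart_mul_T (Y : H →L[ℂ] H) : Cx.dualPart Y * Cx.T = Cx.blockDiag (Y * Cx.T) :=
  Cx.ext_mul_P fun p hp => by
    rw [mul_assoc, Cx.T_mul_P hp, ← mul_assoc, dualPart_mul_P, Nat.sub_sub_self hp,
      blockDiag_mul_P]
    simp only [mul_assoc]
    rw [← Cx.T_mul_P hp]

theorem dualityS_eq : dualityS Cx = Cx.T * Cx.phase (dualityCoeff n) := by
  rw [dualityS, phase, Finset.mul_sum]
  exact Finset.sum_congr rfl fun p _ => (mul_smul_comm _ _ _).symm

theorem dualityS_mul_P (p : ℕ) : dualityS Cx * Cx.P p = dualityCoeff n p • (Cx.T * Cx.P p) := by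
  rw [dualityS_eq, mul_assoc, phase_mul_P, mul_smul_comm]

theorem isSelfAdjoint_dualityS : IsSelfAdjoint (dualityS Cx) := by
  rw [isSelfAdjoint_iff', dualityS_eq, adjoint_mul, adjoint_phase]
  refine Cx.ext_mul_P fun p hp => ?_
  have hT : Cx.T† * Cx.P p = (-1 : ℂ) ^ ((n - p) * p) • (Cx.T * Cx.P p) := Cx.T_adjoint p hp
  rw [mul_assoc, hT, mul_smul_comm, Cx.T_mul_P hp, ← mul_assoc, phase_mul_P, smul_mul_assoc,
    ← Cx.T_mul_P hp, smul_smul, neg_one_pow_mul_star_dualityCoeff hp, mul_assoc, phase_mul_P,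
    mul_smul_comm]

theorem b_mul_dualityS_add_dualityS_mul_adjoint_b :
    Cx.b * dualityS Cx + dualityS Cx * Cx.b† = 0 := by
  refine Cx.ext_mul_P fun p hp => ?_
  have hTb : Cx.T * Cx.b† * Cx.P p = -((-1 : ℂ) ^ p • (Cx.b * Cx.T * Cx.P p)) :=
    eq_neg_of_add_eq_zero_left (Cx.T_b p hp)
  rw [add_mul, zero_mul, mul_assoc, dualityS_mul_P, mul_assoc, adjoint_b_mul_P, ← mul_assoc,
    dualityS_mul_P, smul_mul_assoc, mul_assoc Cx.T, ← adjoint_b_mul_P, ← mul_assoc, hTb,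
    dualityCoeff_succ, smul_neg, smul_smul, mul_right_comm, ← mul_pow, neg_one_mul, neg_neg,
    one_pow, one_mul, mul_smul_comm, mul_assoc, add_neg_cancel]

theorem exists_homotopy_inverse_dualityS :
    ∃ g k₁ k₂ : H →L[ℂ] H, dualityS Cx * g = 1 + Cx.b * k₁ + k₁ * Cx.b ∧
      g * dualityS Cx = 1 + Cx.b† * k₂ + k₂ * Cx.b† := by
  obtain ⟨T', h₁, h₂, hTT', hT'T⟩ := Cx.T_equiv
  set U := Cx.phase (dualityCoeff n)
  set U' := Cx.phase fun p => star (dualityCoeff n p)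
  have hSU : dualityS Cx = Cx.T * U := Cx.dualityS_eq
  have hUU' : U * U' = 1 :=
    Cx.phase_mul_phase fun p => (mul_comm _ _).trans (star_dualityCoeff_mul_self n p)
  have hU'U : U' * U = 1 := Cx.phase_mul_phase fun p => star_dualityCoeff_mul_self n p
  have hTT'' : Cx.T * T' = 1 + (Cx.b * h₁ + h₁ * Cx.b) := sub_eq_iff_eq_add'.mp hTT'
  have hT'T' : T' * Cx.T = 1 + (Cx.b† * h₂ + h₂ * Cx.b†) := sub_eq_iff_eq_add'.mp hT'T
  refine ⟨U' * Cx.dualPart T', Cx.raise h₁, (Cx.raise (h₂†))†, ?_, ?_⟩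
  · calc dualityS Cx * (U' * Cx.dualPart T') = Cx.T * (U * U') * Cx.dualPart T' := by
          rw [hSU]; simp only [mul_assoc]
      _ = Cx.blockDiag (Cx.T * T') := by rw [hUU', mul_one, T_mul_dualPart]
      _ = 1 + Cx.b * Cx.raise h₁ + Cx.raise h₁ * Cx.b := by
          rw [hTT'', blockDiag_add, blockDiag_add, blockDiag_one, blockDiag_b_mul,
            blockDiag_mul_b, add_assoc]
  · calc U' * Cx.dualPart T' * dualityS Cx = U' * (Cx.blockDiag (T' * Cx.T) * U) := by
          rw [hSU, ← dualPart_mul_T]; simp only [mul_assoc]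
      _ = Cx.blockDiag (T' * Cx.T) := by
          rw [← phase_mul_blockDiag, ← mul_assoc, hU'U, one_mul]
      _ = 1 + Cx.b† * (Cx.raise (h₂†))† + (Cx.raise (h₂†))† * Cx.b† := by
          rw [hT'T', blockDiag_add, blockDiag_add, blockDiag_one, blockDiag_adjoint_b_mul,
            blockDiag_mul_adjoint_b, add_assoc]

end HilbertPoincareComplex

/-- `S` is self-adjoint, `b S + S b* = 0`, and the self-adjoint
operators `B + S` and `B - S` are invertible. -/
theorem statement0 {n : ℕ} {H : Type*} [NormedAddCommGroup H] [InnerProductSpace ℂ H]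
    [CompleteSpace H] (Cx : HilbertPoincareComplex n H)
    (B S : H →L[ℂ] H)
    (hB : B = Cx.b + ContinuousLinearMap.adjoint Cx.b)
    (hS : S = dualityS Cx) :
    IsSelfAdjoint S ∧
    Cx.b ∘L S + S ∘L ContinuousLinearMap.adjoint Cx.b = 0 ∧
    IsSelfAdjoint (B + S) ∧ IsSelfAdjoint (B - S) ∧
    IsUnit (B + S) ∧ IsUnit (B - S) := by
  subst hB hS
  obtain ⟨g, k₁, k₂, h₁, h₂⟩ := Cx.exists_homotopy_inverse_dualityS
  have hS := Cx.isSelfAdjoint_dualityS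
  have hbS := Cx.b_mul_dualityS_add_dualityS_mul_adjoint_b
  have hB : IsSelfAdjoint (Cx.b + Cx.b†) := IsSelfAdjoint.add_star_self Cx.b
  have hbS' : Cx.b * -dualityS Cx + -dualityS Cx * Cx.b† = 0 := by
    rw [mul_neg, neg_mul, ← neg_add, hbS, neg_zero]
  have h₁' : -dualityS Cx * -g = 1 + Cx.b * k₁ + k₁ * Cx.b := by rwa [neg_mul_neg]
  have h₂' : -g * -dualityS Cx = 1 + Cx.b† * k₂ + k₂ * Cx.b† := by rwa [neg_mul_neg]
  refine ⟨hS, hbS, hB.add hS, hB.sub hS,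
    isUnit_add_adjoint_add_of_homotopy_inverse Cx.b_sq hS hbS h₁ h₂, ?_⟩
  rw [sub_eq_add_neg]
  exact isUnit_add_adjoint_add_of_homotopy_inverse Cx.b_sq hS.neg hbS' h₁' h₂'
end
end

section
/- Let (E, b, T) and (F, d, R) be Hilbert–Poincaré complexes of dimensions n and m respectively. Define the total complex (E⊗F, ∂) by ∂(x⊗y) = bx⊗y + (-1)^{|x|} x⊗dy, and define (T⊗̂R)(x⊗y) = (-1)^{(n-|x|)·|y|} Tx⊗Ry. Then for all v in (E⊗F)_k: (1) (T⊗̂R)∂*v + (-1)^k ∂(T⊗̂R)v = 0, and (2) (T⊗̂R)*v = (-1)^{(n+m-k)k}(T⊗̂R)v. Consequently (E⊗F, ∂, T⊗̂R) is an (n+m)-dimensional Hilbert–Poincaré complex. -/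
/-!
Statement 6: Tensor product of Hilbert–Poincaré complexes. If `(E, b, T)` and `(F, d, R)`
are Hilbert–Poincaré complexes of dimensions `n` and `m`, the total complex `(E⊗F, ∂)`
with `∂(x⊗y) = bx⊗y + (-1)^{|x|} x⊗dy` and the duality operator
`(T⊗̂R)(x⊗y) = (-1)^{(n-|x|)|y|} Tx⊗Ry` satisfy, for `v = x⊗y` of degree `k = p + q`:
(1) `(T⊗̂R)∂*v + (-1)^k ∂(T⊗̂R)v = 0`;
(2) `(T⊗̂R)*v = (-1)^{(n+m-k)k} (T⊗̂R)v`.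

The statement is expressed elementwise on the elementary tensor `x ⊗ y` with `x` of
degree `p` and `y` of degree `q`; the chain-level identities of the two complexes at the
relevant elements are the hypotheses (`b*`, `d*` denote the adjoint differentials and
`T*`, `R*` the adjoint duality operators, given as data), and the formulas
`∂*(x⊗y) = b*x⊗y + (-1)^p x⊗d*y` and
`(T⊗̂R)*(x⊗y) = (-1)^{p(m-q)} T*x ⊗ R*y` for the adjoints on the tensor product are
used to expand both sides.
-/


private lemma negOneCongr (a c t : ℤ) (h : a = c + 2 * t) :
    ((-1 : ℂ)) ^ a = (-1 : ℂ) ^ c := by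
  rw [h, zpow_add₀ (by norm_num : (-1 : ℂ) ≠ 0), zpow_mul]
  norm_num

open scoped TensorProduct
theorem statement6
    {E F : Type*} [AddCommGroup E] [AddCommGroup F] [Module ℂ E] [Module ℂ F]
    (n m p q : ℤ)
    (b bs T Ts : E →ₗ[ℂ] E)   -- b, b*, T, T* of (E, b, T)
    (d ds R Rs : F →ₗ[ℂ] F)   -- d, d*, R, R* of (F, d, R)
    (x : E) (y : F)
    -- the Hilbert–Poincaré identities of (E, b, T) at x (degree p) and (F, d, R) at y
    (hTb : T (bs x) + ((-1 : ℂ) ^ p) • b (T x) = 0)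
    (hRd : R (ds y) + ((-1 : ℂ) ^ q) • d (R y) = 0)
    (hTs : Ts x = ((-1 : ℂ) ^ ((n - p) * p)) • T x)
    (hRs : Rs y = ((-1 : ℂ) ^ ((m - q) * q)) • R y) :
    -- (1): (T⊗̂R)∂*(x⊗y) + (-1)^{p+q} ∂((T⊗̂R)(x⊗y)) = 0, expanded via
    --      ∂*(x⊗y) = (b*x)⊗y + (-1)^p x⊗(d*y) of degrees (p+1, q) and (p, q+1)
    ((-1 : ℂ) ^ ((n - (p + 1)) * q)) • (T (bs x) ⊗ₜ[ℂ] R y)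
      + ((-1 : ℂ) ^ p * (-1 : ℂ) ^ ((n - p) * (q + 1))) • (T x ⊗ₜ[ℂ] R (ds y))
      + ((-1 : ℂ) ^ (p + q) * (-1 : ℂ) ^ ((n - p) * q)) • (b (T x) ⊗ₜ[ℂ] R y)
      + ((-1 : ℂ) ^ (p + q) * (-1 : ℂ) ^ ((n - p) * q) * (-1 : ℂ) ^ (n - p)) •
          (T x ⊗ₜ[ℂ] d (R y)) = 0
    ∧
    -- (2): (T⊗̂R)*(x⊗y) = (-1)^{(n+m-k)k} (T⊗̂R)(x⊗y) with k = p + q, using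
    --      (T⊗̂R)*(x⊗y) = (-1)^{p(m-q)} T*x ⊗ R*y
    ((-1 : ℂ) ^ (p * (m - q))) • (Ts x ⊗ₜ[ℂ] Rs y) =
      ((-1 : ℂ) ^ ((n + m - (p + q)) * (p + q)) * (-1 : ℂ) ^ ((n - p) * q)) •
        (T x ⊗ₜ[ℂ] R y) := by

  have hne : (-1 : ℂ) ≠ 0 := by norm_num
  have h1 : T (bs x) = (-((-1 : ℂ) ^ p)) • b (T x) := by
    rw [neg_smul]; exact eq_neg_of_add_eq_zero_left hTb
  have h2 : R (ds y) = (-((-1 : ℂ) ^ q)) • d (R y) := by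
    rw [neg_smul]; exact eq_neg_of_add_eq_zero_left hRd
  constructor
  · rw [h1, h2]
    simp only [← TensorProduct.smul_tmul', TensorProduct.tmul_smul, smul_smul]
    have e1 : ((-1 : ℂ) ^ ((n - (p + 1)) * q)) * (-((-1 : ℂ) ^ p))
        = -((-1 : ℂ) ^ (p + q) * (-1 : ℂ) ^ ((n - p) * q)) := by
      rw [mul_neg, ← zpow_add₀ hne, ← zpow_add₀ hne]
      congr 1
      exact negOneCongr _ _ (-q) (by ring)
    have e2 : ((-1 : ℂ) ^ p * (-1 : ℂ) ^ ((n - p) * (q + 1))) * (-((-1 : ℂ) ^ q))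
        = -((-1 : ℂ) ^ (p + q) * (-1 : ℂ) ^ ((n - p) * q) * (-1 : ℂ) ^ (n - p)) := by
      rw [mul_neg, ← zpow_add₀ hne, ← zpow_add₀ hne, ← zpow_add₀ hne, ← zpow_add₀ hne]
      congr 1
      exact negOneCongr _ _ 0 (by ring)
    rw [e1, e2, neg_smul, neg_smul]
    abel
  · rw [hTs, hRs]
    simp only [← TensorProduct.smul_tmul', TensorProduct.tmul_smul, smul_smul,
      ← zpow_add₀ hne]
    congr 1
    refine negOneCongr _ _ (q * (p - n)) ?_
    ring
end

section
/- Let D be a self-adjoint operator, let g(x) = x(1+x²)^{-1/2} and f(x) = (1+x²)^{-1/2}, and let S₁ be a symmetry (self-adjoint unitary) anticommuting with D. Then S₂ := g(D) + S₁f(D) satisfies S₂² = 1, i.e., S₂ is a symmetry; consequently S := S₂S₁S₂ is also a symmetry and P := (S+1)/2 is a projection. -/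
/-!
Statement 8: Let `D` be a self-adjoint operator, `g(x) = x(1+x²)^{-1/2}`,
`f(x) = (1+x²)^{-1/2}`, and let `S₁` be a symmetry (self-adjoint unitary) anticommuting
with `D`. Then `S₂ := g(D) + S₁ f(D)` is a symmetry (`S₂² = 1`), `S := S₂ S₁ S₂` is also
a symmetry, and `P := (S+1)/2` is a projection.

The functional calculus elements `f(D)` and `g(D)` are recorded via their defining
properties (self-adjoint, commuting, `f(D)² + g(D)² = 1`, commuting resp.
anticommuting with `S₁`, since `f` is even and `g` is odd), in an arbitrary complex
star algebra of operators.
-/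

theorem statement8 {A : Type*} [Ring A] [StarRing A] [Algebra ℂ A] [StarModule ℂ A]
    (fD gD S₁ : A)   -- f(D), g(D) and the symmetry S₁
    (hf_sa : star fD = fD) (hg_sa : star gD = gD)
    (hcomm : fD * gD = gD * fD)
    (hfg : fD ^ 2 + gD ^ 2 = 1)             -- f² + g² = 1
    (hS₁_sa : star S₁ = S₁) (hS₁_sq : S₁ * S₁ = 1)
    (hS₁g : S₁ * gD = -(gD * S₁))           -- S₁ anticommutes with g(D) (g odd)
    (hS₁f : S₁ * fD = fD * S₁)              -- S₁ commutes with f(D) (f even)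
    (S₂ S P : A)
    (hS₂ : S₂ = gD + S₁ * fD)
    (hS : S = S₂ * S₁ * S₂)
    (hP : P = (2⁻¹ : ℂ) • (S + 1)) :
    S₂ * S₂ = 1 ∧ star S₂ = S₂ ∧
    S * S = 1 ∧ star S = S ∧
    IsIdempotentElem P ∧ star P = P := by
  have hgS₁ : gD * S₁ = -(S₁ * gD) := by rw [hS₁g, neg_neg]
  have h2 : S₂ * S₂ = 1 := by
    rw [hS₂]
    have : (gD + S₁ * fD) * (gD + S₁ * fD)
        = gD * gD + (gD * S₁) * fD + S₁ * (fD * gD) + S₁ * ((fD * S₁) * fD) := by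
      noncomm_ring
    rw [this, hgS₁, ← hS₁f, hcomm]
    have : -(S₁ * gD) * fD + S₁ * (gD * fD) = 0 := by noncomm_ring
    calc gD * gD + -(S₁ * gD) * fD + S₁ * (gD * fD) + S₁ * (S₁ * fD * fD)
        = gD * gD + S₁ * S₁ * (fD * fD) + (-(S₁ * gD) * fD + S₁ * (gD * fD)) := by
          noncomm_ring
      _ = gD ^ 2 + fD ^ 2 := by rw [this, hS₁_sq]; noncomm_ring
      _ = 1 := by rw [add_comm, hfg]
  have h2sa : star S₂ = S₂ := by
    rw [hS₂, star_add, star_mul, hg_sa, hf_sa, hS₁_sa, hS₁f]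
  have hssq : S * S = 1 := by
    rw [hS]
    calc S₂ * S₁ * S₂ * (S₂ * S₁ * S₂) = S₂ * S₁ * (S₂ * S₂) * S₁ * S₂ := by noncomm_ring
      _ = S₂ * (S₁ * S₁) * S₂ := by rw [h2]; noncomm_ring
      _ = 1 := by rw [hS₁_sq, mul_one, h2]
  have hssa : star S = S := by
    rw [hS, star_mul, star_mul, h2sa, hS₁_sa, mul_assoc]
  refine ⟨h2, h2sa, hssq, hssa, ?_, ?_⟩
  · show P * P = P
    rw [hP, smul_mul_smul_comm]
    have : (S + 1) * (S + 1) = S * S + 2 • (S + 1) - 2 • 1 + 1 := by noncomm_ring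
    rw [this, hssq]
    module
  · rw [hP, star_smul, star_add, hssa, star_one]
    norm_num
end

section
/- Let ε₀ > 0 and let B, S be bounded self-adjoint operators with (B-S)² ≥ ε₀·1, and let D be a self-adjoint operator on another Hilbert space. Then (B-S)²⊗1 + 1⊗D² is a positive invertible operator, with ((B-S)²⊗1 + 1⊗D²)^{-1} = (1⊗(ε₀+D²)^{-1})·[((B-S)²-ε₀)⊗(ε₀+D²)^{-1} + 1⊗1]^{-1}, and the operator ((B-S)²-ε₀)⊗(ε₀+D²)^{-1} + 1⊗1 is invertible with spectrum bounded below by 1. -/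
/-!
Write `s = ε₀ • 1`. In the C⋆-algebra of bounded operators, `X - s ≥ 0`, `Y ≥ 0` and `s > 0`, so
`s + Y` and `X + Y = (s + Y) + (X - s)` are strictly positive, hence invertible. With
`R = (s + Y)⁻¹ ≥ 0`, which commutes with `X - s`, the product `(X - s) R` of commuting positive
operators is positive, so `(X - s) R + 1 ≥ 1`: it is invertible with spectrum in `[1, ∞)`.
Finally `X + Y = ((X - s) R + 1)(s + Y)` with commuting factors, which gives the inverse formula.
-/

namespace ContinuousLinearMap

variable {𝕜 E : Type*} [RCLike 𝕜] [NormedAddCommGroup E] [InnerProductSpace 𝕜 E]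
  [CompleteSpace E]

lemma smul_one_le_of_forall_le_reApplyInnerSelf {T : E →L[𝕜] E} (hT : IsSelfAdjoint T) {c : ℝ}
    (h : ∀ v, c * ‖v‖ ^ 2 ≤ T.reApplyInnerSelf v) : (c : 𝕜) • 1 ≤ T := by
  rw [le_def, isPositive_def']
  refine ⟨hT.sub (.smul (RCLike.conj_ofReal c) (.one _)), fun v => ?_⟩
  have hv : (T - (c : 𝕜) • 1).reApplyInnerSelf v = T.reApplyInnerSelf v - c * ‖v‖ ^ 2 := by
    simp [reApplyInnerSelf_apply, inner_sub_left, inner_smul_left, inner_self_eq_norm_sq_to_K]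
  linarith [h v]

end ContinuousLinearMap

lemma Commute.ringInverse_right {M₀ : Type*} [MonoidWithZero M₀] {a b : M₀}
    (h : Commute a b) : Commute a (Ring.inverse b) := by
  by_cases hb : IsUnit b
  · obtain ⟨u, rfl⟩ := hb
    simpa only [Ring.inverse_unit] using h.units_inv_right
  · simpa only [Ring.inverse_non_unit _ hb] using Commute.zero_right a

lemma Ring.inverse_add_of_commute {R : Type*} [Ring R] {a u : R} (hu : IsUnit u)
    (h : Commute a u) :
    Ring.inverse (a + u) = Ring.inverse u * Ring.inverse (a * Ring.inverse u + 1) := by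
  have hfactor : a + u = (a * Ring.inverse u + 1) * u := by
    rw [add_mul, mul_assoc, Ring.inverse_mul_cancel _ hu, mul_one, one_mul]
  have hcomm : Commute (a * Ring.inverse u + 1) u :=
    (h.mul_left (Commute.refl u).ringInverse_right.symm).add_left (Commute.one_left u)
  rw [hfactor, Ring.mul_inverse_rev' hcomm]

section CStarAlgebra

variable {A : Type*} [CStarAlgebra A] [PartialOrder A] [StarOrderedRing A]

lemma mul_ringInverse_nonneg {a u : A} (ha : 0 ≤ a) (hu : IsStrictlyPositive u)
    (h : Commute a u) : 0 ≤ a * Ring.inverse u :=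
  h.ringInverse_right.mul_nonneg ha (isStrictlyPositive_ringInverse_iff.mpr hu).nonneg

lemma one_le_re_of_mem_spectrum {a : A} (ha : 1 ≤ a) {z : ℂ} (hz : z ∈ spectrum ℂ a) :
    1 ≤ z.re := by
  have hsa : IsSelfAdjoint a := by
    simpa using (IsSelfAdjoint.of_nonneg (sub_nonneg.mpr ha)).add (IsSelfAdjoint.one A)
  rw [hsa.mem_spectrum_eq_re hz, ← Complex.coe_algebraMap, spectrum.algebraMap_mem_iff] at hz
  exact (CFC.one_le_iff a hsa).mp ha _ hz

end CStarAlgebra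

open ContinuousLinearMap

theorem statement10 {H : Type*} [NormedAddCommGroup H] [InnerProductSpace ℂ H]
    [CompleteSpace H]
    (ε₀ : ℝ) (hε₀ : 0 < ε₀)
    (BS : H →L[ℂ] H)               -- the operator (B-S)⊗1
    (hBS : IsSelfAdjoint BS)
    (X Y : H →L[ℂ] H)
    (hX : X = BS ∘L BS)            -- X = (B-S)²⊗1
    (hXlow : ∀ v : H, ε₀ * ‖v‖ ^ 2 ≤ X.reApplyInnerSelf v)   -- (B-S)² ≥ ε₀·1
    (hY : Y.IsPositive)            -- Y = 1⊗D² ≥ 0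
    (hXY : Commute X Y) :
    IsUnit ((ε₀ : ℂ) • (1 : H →L[ℂ] H) + Y) ∧
    IsUnit (X + Y) ∧ (X + Y).IsPositive ∧
    IsUnit ((X - (ε₀ : ℂ) • (1 : H →L[ℂ] H)) *
      Ring.inverse ((ε₀ : ℂ) • (1 : H →L[ℂ] H) + Y) + 1) ∧
    Ring.inverse (X + Y) =
      Ring.inverse ((ε₀ : ℂ) • (1 : H →L[ℂ] H) + Y) *
        Ring.inverse ((X - (ε₀ : ℂ) • (1 : H →L[ℂ] H)) *
          Ring.inverse ((ε₀ : ℂ) • (1 : H →L[ℂ] H) + Y) + 1) ∧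
    ∀ z ∈ spectrum ℂ ((X - (ε₀ : ℂ) • (1 : H →L[ℂ] H)) *
      Ring.inverse ((ε₀ : ℂ) • (1 : H →L[ℂ] H) + Y) + 1), 1 ≤ z.re := by
  have hs : IsStrictlyPositive ((ε₀ : ℂ) • (1 : H →L[ℂ] H)) := by
    rw [Complex.coe_smul, ← Algebra.algebraMap_eq_smul_one]
    exact isStrictlyPositive_algebraMap hε₀
  set s : H →L[ℂ] H := (ε₀ : ℂ) • 1
  have hXsa : IsSelfAdjoint X := by
    rw [hX, ← mul_def]
    simpa [hBS.star_eq] using IsSelfAdjoint.star_mul_self BS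
  have hXs : 0 ≤ X - s := sub_nonneg.mpr (smul_one_le_of_forall_le_reApplyInnerSelf hXsa hXlow)
  have hsY : IsStrictlyPositive (s + Y) := hs.add_nonneg ((nonneg_iff_isPositive Y).mpr hY)
  have hsum : X - s + (s + Y) = X + Y := by abel
  have hXY' : IsStrictlyPositive (X + Y) := hsum ▸ .nonneg_add hXs hsY
  have hcomm : Commute (X - s) (s + Y) :=
    ((Commute.one_left X).smul_left _).symm.add_right hXY |>.sub_left
      ((Commute.refl s).add_right ((Commute.one_left Y).smul_left _))
  have hP : 1 ≤ (X - s) * Ring.inverse (s + Y) + 1 :=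
    le_add_of_nonneg_left (mul_ringInverse_nonneg hXs hsY hcomm)
  refine ⟨hsY.isUnit, hXY'.isUnit, (nonneg_iff_isPositive _).mp hXY'.nonneg,
    (isStrictlyPositive_one.of_le hP).isUnit, ?_, fun z hz => one_le_re_of_mem_spectrum hP hz⟩
  rw [← hsum, Ring.inverse_add_of_commute hsY.isUnit hcomm]
end
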